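/- Let ρ be a positive definite matrix in M_n(ℂ) and ω ∈ ℝ. The linear operator [ρ]_ω(A) = ∫₀¹ e^{ω(1/2−s)} ρ^s A ρ^{1−s} ds on M_n(ℂ) is invertible, with inverse given by [ρ]_ω^{−1}(A) = ∫₀^∞ (tI + e^{−ω/2}ρ)^{−1} A (tI + e^{ω/2}ρ)^{−1} dt. -/

import Mathlib

/-!
Diagonalize `ρ = U diag(λ) U*`. In the basis of eigenvectors both operators are Schur
multipliers: with `a_k = e^{-ω/2} λ_k` and `b_l = e^{ω/2} λ_l`, the operator `[ρ]_ω` multiplies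
the `(k, l)` entry by `∫₀¹ a_k^s b_l^{1-s} ds = L(a_k, b_l)`, the logarithmic mean, while the
candidate inverse multiplies it by `∫₀^∞ dt / ((t + a_k)(t + b_l)) = 1 / L(a_k, b_l)`.
Schur multipliers compose by multiplying their symbols, so the two operators are mutually inverse.
-/

open Matrix
open scoped ComplexOrder

attribute [local instance] Matrix.normedAddCommGroup Matrix.normedSpace

/-- The real power `ρ^s` of a positive definite matrix, via the functional calculus. -/
noncomputable def mpow {n : ℕ} {ρ : Matrix (Fin n) (Fin n) ℂ} (hρ : ρ.PosDef) (s : ℝ) :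
    Matrix (Fin n) (Fin n) ℂ :=
  hρ.1.cfc fun x => x ^ s

/-- The non-commutative multiplication operator
`[ρ]_ω(A) = ∫₀¹ e^{ω(1/2−s)} ρ^s A ρ^{1−s} ds`. -/
noncomputable def mulRho {n : ℕ} {ρ : Matrix (Fin n) (Fin n) ℂ} (hρ : ρ.PosDef)
    (ω : ℝ) (A : Matrix (Fin n) (Fin n) ℂ) : Matrix (Fin n) (Fin n) ℂ :=
  ∫ s in (0:ℝ)..1, (Real.exp (ω * (1 / 2 - s)) : ℂ) • (mpow hρ s * A * mpow hρ (1 - s))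

/-- The candidate inverse
`[ρ]_ω⁻¹(A) = ∫₀^∞ (tI + e^{−ω/2}ρ)⁻¹ A (tI + e^{ω/2}ρ)⁻¹ dt`. -/
noncomputable def divRho {n : ℕ} (ρ : Matrix (Fin n) (Fin n) ℂ)
    (ω : ℝ) (A : Matrix (Fin n) (Fin n) ℂ) : Matrix (Fin n) (Fin n) ℂ :=
  ∫ t in Set.Ioi (0:ℝ),
    ((t : ℂ) • (1 : Matrix (Fin n) (Fin n) ℂ) + (Real.exp (-ω / 2) : ℂ) • ρ)⁻¹ * A *
      ((t : ℂ) • (1 : Matrix (Fin n) (Fin n) ℂ) + (Real.exp (ω / 2) : ℂ) • ρ)⁻¹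

open MeasureTheory Set Filter Topology Unitary

namespace Matrix

/- With the local norm instance, the norm topology on matrices agrees with
`instTopologicalSpaceMatrix` only up to unfolding, so instance search misses this. -/
noncomputable instance instContinuousENorm {m n α : Type*} [Fintype m] [Fintype n]
    [NormedAddCommGroup α] : ContinuousENorm (Matrix m n α) :=
  SeminormedAddGroup.toContinuousENorm

section Integral

variable {m n α E : Type*} [Fintype m] [Fintype n] [MeasurableSpace α] {μ : Measure α}
  [NormedAddCommGroup E] {f : m → n → α → E}

lemma integrable_of (hf : ∀ i j, Integrable (f i j) μ) :
    Integrable (fun x => of fun i j => f i j x) μ :=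
  integrable_pi_iff.2 fun i => integrable_pi_iff.2 (hf i)

lemma integral_of [NormedSpace ℝ E] [CompleteSpace E] (hf : ∀ i j, Integrable (f i j) μ) :
    ∫ x, of (fun i j => f i j x) ∂μ = of fun i j => ∫ x, f i j x ∂μ := by
  ext i j
  have hrow := eval_integral (E := fun _ : m => n → E) (f := fun x i j => f i j x)
    (fun i => integrable_pi_iff.2 (hf i)) i
  exact (congrFun hrow j).trans (eval_integral (hf i) j)

end Integral

variable {m : Type*} [Fintype m] [DecidableEq m]

noncomputable def conjHadamard (U : unitaryGroup m ℂ) (M A : Matrix m m ℂ) : Matrix m m ℂ :=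
  conjStarAlgAut ℂ _ U (M ⊙ (conjStarAlgAut ℂ _ U).symm A)

variable (U : unitaryGroup m ℂ)

lemma conjHadamard_conjHadamard (M N A : Matrix m m ℂ) :
    conjHadamard U M (conjHadamard U N A) = conjHadamard U (M ⊙ N) A := by
  simp only [conjHadamard, StarAlgEquiv.symm_apply_apply, hadamard_assoc]

lemma conjHadamard_of_one (A : Matrix m m ℂ) : conjHadamard U (of fun _ _ => 1) A = A := by
  have (B : Matrix m m ℂ) : (of fun _ _ => (1 : ℂ)) ⊙ B = B := by ext; simp
  simp only [conjHadamard, this, StarAlgEquiv.apply_symm_apply]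

lemma conj_diagonal_mul_mul_conj_diagonal (d e : m → ℂ) (A : Matrix m m ℂ) :
    conjStarAlgAut ℂ _ U (diagonal d) * A * conjStarAlgAut ℂ _ U (diagonal e) =
      conjHadamard U (of fun i j => d i * e j) A := by
  have hschur (B : Matrix m m ℂ) :
      diagonal d * B * diagonal e = (of fun i j => d i * e j) ⊙ B := by
    ext i j
    simp only [mul_diagonal, diagonal_mul, hadamard_apply, of_apply]
    ring
  conv_lhs => rw [← StarAlgEquiv.apply_symm_apply (conjStarAlgAut ℂ _ U) A]
  rw [← map_mul, ← map_mul, hschur, conjHadamard]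

lemma inv_conj_diagonal {d : m → ℂ} (hd : ∀ i, d i ≠ 0) :
    (conjStarAlgAut ℂ _ U (diagonal d))⁻¹ = conjStarAlgAut ℂ _ U (diagonal d⁻¹) := by
  refine inv_eq_right_inv ?_
  rw [← map_mul, diagonal_mul_diagonal, ← map_one (conjStarAlgAut ℂ _ U), ← diagonal_one]
  exact congrArg _ (congrArg diagonal (funext fun i => mul_inv_cancel₀ (hd i)))

lemma integral_conjHadamard_of {α : Type*} [MeasurableSpace α] {μ : Measure α}
    (A : Matrix m m ℂ) {f : m → m → α → ℂ} (hf : ∀ i j, Integrable (f i j) μ) :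
    ∫ x, conjHadamard U (of fun i j => f i j x) A ∂μ =
      conjHadamard U (of fun i j => ∫ x, f i j x ∂μ) A := by
  let L : Matrix m m ℂ →ₗ[ℂ] Matrix m m ℂ :=
    { toFun := fun M => conjHadamard U M A
      map_add' := fun M N => by simp only [conjHadamard, add_hadamard, map_add]
      map_smul' := fun c M => by simp only [conjHadamard, smul_hadamard, map_smul]; rfl }
  rw [← integral_of hf]
  exact L.toContinuousLinearMap.integral_comp_comm (integrable_of hf)

end Matrix

namespace Real

noncomputable def logMean (a b : ℝ) : ℝ :=
  if a = b then a else (a - b) / (log a - log b)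

lemma logMean_pos {a b : ℝ} (ha : 0 < a) (hb : 0 < b) : 0 < logMean a b := by
  unfold logMean
  split_ifs with hab
  · exact ha
  · rcases lt_or_gt_of_ne hab with h | h
    · exact div_pos_of_neg_of_neg (sub_neg.2 h) (sub_neg.2 (log_lt_log ha h))
    · exact div_pos (sub_pos.2 h) (sub_pos.2 (log_lt_log hb h))

lemma rpow_mul_rpow_one_sub {a b : ℝ} (ha : 0 < a) (hb : 0 < b) (s : ℝ) :
    a ^ s * b ^ (1 - s) = b * exp (s * (log a - log b)) := by
  rw [rpow_def_of_pos ha, rpow_def_of_pos hb, ← exp_log hb, ← exp_add, ← exp_add, log_exp]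
  ring_nf

lemma integral_rpow_mul_rpow_one_sub {a b : ℝ} (ha : 0 < a) (hb : 0 < b) :
    ∫ s in (0:ℝ)..1, a ^ s * b ^ (1 - s) = logMean a b := by
  simp_rw [rpow_mul_rpow_one_sub ha hb, intervalIntegral.integral_const_mul]
  unfold logMean
  split_ifs with hab
  · simp [hab]
  · have hlog : log a - log b ≠ 0 :=
      sub_ne_zero.2 fun h => hab (log_injOn_pos ha hb h)
    rw [intervalIntegral.integral_comp_mul_right (fun x => exp x) hlog, integral_exp, zero_mul,
      one_mul, exp_zero, exp_sub, exp_log ha, exp_log hb, smul_eq_mul]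
    field_simp

lemma exists_antideriv_inv_add_mul_add {a b : ℝ} (ha : 0 < a) (hb : 0 < b) :
    ∃ F : ℝ → ℝ, (∀ t ∈ Ici (0:ℝ), HasDerivAt F ((t + a) * (t + b))⁻¹ t) ∧
      Tendsto F atTop (𝓝 0) ∧ F 0 = -(logMean a b)⁻¹ := by
  by_cases hab : a = b
  · subst hab
    refine ⟨fun t => -(t + a)⁻¹, fun t ht => ?_, ?_, by simp [logMean]⟩
    · have hta : t + a ≠ 0 := by have : (0:ℝ) ≤ t := ht; positivity
      refine (((hasDerivAt_id t).add_const a).inv hta).neg.congr_deriv ?_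
      simp only [id, mul_inv, neg_div, neg_neg, one_div, sq]
    · simpa using (tendsto_inv_atTop_zero.comp (tendsto_atTop_add_const_right _ a tendsto_id)).neg
  · have hab' : a - b ≠ 0 := sub_ne_zero.2 hab
    refine ⟨fun t => (log (t + b) - log (t + a)) / (a - b), fun t ht => ?_, ?_, ?_⟩
    · have ht : (0:ℝ) ≤ t := ht
      have htb : t + b ≠ 0 := by positivity
      have hta : t + a ≠ 0 := by positivity
      refine ((((hasDerivAt_id t).add_const b).log htb).sub
        (((hasDerivAt_id t).add_const a).log hta)).div_const (a - b) |>.congr_deriv ?_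
      simp only [id]
      field_simp
      ring
    · have h := (tendsto_log_comp_add_sub_log b).sub (tendsto_log_comp_add_sub_log a)
      simpa using h.div_const (a - b)
    · simp only [zero_add, logMean, if_neg hab, inv_div]
      ring

lemma integrableOn_Ioi_inv_add_mul_add {a b : ℝ} (ha : 0 < a) (hb : 0 < b) :
    IntegrableOn (fun t => ((t + a) * (t + b))⁻¹) (Ioi 0) :=
  have ⟨_, hderiv, htendsto, _⟩ := exists_antideriv_inv_add_mul_add ha hb
  integrableOn_Ioi_deriv_of_nonneg' hderiv (fun t (ht : 0 < t) => by positivity) htendsto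

lemma integral_Ioi_inv_add_mul_add {a b : ℝ} (ha : 0 < a) (hb : 0 < b) :
    ∫ t in Ioi (0:ℝ), ((t + a) * (t + b))⁻¹ = (logMean a b)⁻¹ := by
  obtain ⟨F, hderiv, htendsto, hF0⟩ := exists_antideriv_inv_add_mul_add ha hb
  rw [integral_Ioi_of_hasDerivAt_of_nonneg' hderiv (fun t (ht : 0 < t) => by positivity)
    htendsto, hF0, zero_sub, neg_neg]

lemma exp_mul_rpow_mul_rpow_one_sub (ω s : ℝ) {x y : ℝ} (hx : 0 ≤ x) (hy : 0 ≤ y) :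
    exp (ω * (1 / 2 - s)) * (x ^ s * y ^ (1 - s)) =
      (exp (-ω / 2) * x) ^ s * (exp (ω / 2) * y) ^ (1 - s) := by
  rw [mul_rpow (exp_pos _).le hx, mul_rpow (exp_pos _).le hy, ← exp_mul, ← exp_mul,
    show ω * (1 / 2 - s) = -ω / 2 * s + ω / 2 * (1 - s) by ring, exp_add]
  ring

end Real

open Real

lemma Matrix.IsHermitian.smul_one_add_smul_eq {n : ℕ} {ρ : Matrix (Fin n) (Fin n) ℂ}
    (hρ : ρ.IsHermitian) (t c : ℝ) :
    (t : ℂ) • (1 : Matrix (Fin n) (Fin n) ℂ) + (c : ℂ) • ρ =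
      conjStarAlgAut ℂ _ hρ.eigenvectorUnitary
        (diagonal fun k => ((t + c * hρ.eigenvalues k : ℝ) : ℂ)) := by
  conv_lhs => rw [hρ.spectral_theorem, ← map_one (conjStarAlgAut ℂ _ hρ.eigenvectorUnitary)]
  rw [← map_smul, ← map_smul, ← map_add]
  congr 1
  ext i j
  by_cases hij : i = j <;> simp [hij]

section PosDef

variable {n : ℕ} {ρ : Matrix (Fin n) (Fin n) ℂ} (hρ : ρ.PosDef)

lemma Matrix.PosDef.exp_mul_eigenvalues_pos (c : ℝ) (k : Fin n) :
    0 < exp c * hρ.1.eigenvalues k :=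
  mul_pos (exp_pos c) (hρ.eigenvalues_pos k)

lemma mpow_eq_conj_diagonal (s : ℝ) :
    mpow hρ s = conjStarAlgAut ℂ _ hρ.1.eigenvectorUnitary
      (diagonal fun k => ((hρ.1.eigenvalues k ^ s : ℝ) : ℂ)) := rfl

lemma Matrix.PosDef.inv_smul_one_add_smul_eq {t c : ℝ} (ht : 0 ≤ t) (hc : 0 < c) :
    ((t : ℂ) • (1 : Matrix (Fin n) (Fin n) ℂ) + (c : ℂ) • ρ)⁻¹ =
      conjStarAlgAut ℂ _ hρ.1.eigenvectorUnitary
        (diagonal fun k => (((t + c * hρ.1.eigenvalues k : ℝ) : ℂ))⁻¹) := by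
  rw [hρ.1.smul_one_add_smul_eq, inv_conj_diagonal]
  · rfl
  · intro k
    have := hρ.eigenvalues_pos k
    exact_mod_cast (by positivity : t + c * hρ.1.eigenvalues k ≠ 0)

lemma mulRho_eq_conjHadamard (ω : ℝ) (A : Matrix (Fin n) (Fin n) ℂ) :
    mulRho hρ ω A = conjHadamard hρ.1.eigenvectorUnitary
      (of fun k l => (logMean (exp (-ω / 2) * hρ.1.eigenvalues k)
        (exp (ω / 2) * hρ.1.eigenvalues l) : ℂ)) A := by
  set U := hρ.1.eigenvectorUnitary
  set a := fun k => exp (-ω / 2) * hρ.1.eigenvalues k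
  set b := fun l => exp (ω / 2) * hρ.1.eigenvalues l
  have ha k : 0 < a k := hρ.exp_mul_eigenvalues_pos _ k
  have hb l : 0 < b l := hρ.exp_mul_eigenvalues_pos _ l
  have hintegrand (s : ℝ) :
      (exp (ω * (1 / 2 - s)) : ℂ) • (mpow hρ s * A * mpow hρ (1 - s)) =
        conjHadamard U (of fun k l => ((a k ^ s * b l ^ (1 - s) : ℝ) : ℂ)) A := by
    rw [← Matrix.smul_mul, ← Matrix.smul_mul, mpow_eq_conj_diagonal, mpow_eq_conj_diagonal,
      ← map_smul, ← diagonal_smul, conj_diagonal_mul_mul_conj_diagonal]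
    congr 2
    ext k l
    rw [← exp_mul_rpow_mul_rpow_one_sub ω s (hρ.eigenvalues_pos k).le (hρ.eigenvalues_pos l).le]
    simp only [Pi.smul_apply, smul_eq_mul]
    push_cast
    ring
  have hint k l : Integrable (fun s => ((a k ^ s * b l ^ (1 - s) : ℝ) : ℂ))
      (volume.restrict (Ioc (0:ℝ) 1)) := by
    have hcont : Continuous fun s : ℝ => a k ^ s * b l ^ (1 - s) := by
      simp_rw [rpow_mul_rpow_one_sub (ha k) (hb l)]
      fun_prop
    exact hcont.integrableOn_Ioc.ofReal
  unfold mulRho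
  simp_rw [hintegrand]
  rw [intervalIntegral.integral_of_le zero_le_one, integral_conjHadamard_of U A hint]
  simp_rw [integral_complex_ofReal, ← intervalIntegral.integral_of_le zero_le_one,
    integral_rpow_mul_rpow_one_sub (ha _) (hb _)]
  rfl

lemma divRho_eq_conjHadamard (ω : ℝ) (A : Matrix (Fin n) (Fin n) ℂ) :
    divRho ρ ω A = conjHadamard hρ.1.eigenvectorUnitary
      (of fun k l => ((logMean (exp (-ω / 2) * hρ.1.eigenvalues k)
        (exp (ω / 2) * hρ.1.eigenvalues l))⁻¹ : ℂ)) A := by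
  set U := hρ.1.eigenvectorUnitary
  set a := fun k => exp (-ω / 2) * hρ.1.eigenvalues k
  set b := fun l => exp (ω / 2) * hρ.1.eigenvalues l
  have ha k : 0 < a k := hρ.exp_mul_eigenvalues_pos _ k
  have hb l : 0 < b l := hρ.exp_mul_eigenvalues_pos _ l
  have hintegrand : ∀ t ∈ Ioi (0:ℝ),
      ((t : ℂ) • (1 : Matrix (Fin n) (Fin n) ℂ) + (exp (-ω / 2) : ℂ) • ρ)⁻¹ * A *
        ((t : ℂ) • (1 : Matrix (Fin n) (Fin n) ℂ) + (exp (ω / 2) : ℂ) • ρ)⁻¹ =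
      conjHadamard U (of fun k l => ((((t + a k) * (t + b l))⁻¹ : ℝ) : ℂ)) A := by
    intro t (ht : 0 < t)
    rw [hρ.inv_smul_one_add_smul_eq ht.le (exp_pos _),
      hρ.inv_smul_one_add_smul_eq ht.le (exp_pos _), conj_diagonal_mul_mul_conj_diagonal]
    congr 2
    ext k l
    rw [mul_inv, Complex.ofReal_mul, Complex.ofReal_inv, Complex.ofReal_inv]
  have hint k l : Integrable (fun t => ((((t + a k) * (t + b l))⁻¹ : ℝ) : ℂ))
      (volume.restrict (Ioi (0:ℝ))) :=
    (integrableOn_Ioi_inv_add_mul_add (ha k) (hb l)).ofReal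
  rw [divRho, setIntegral_congr_fun measurableSet_Ioi hintegrand,
    integral_conjHadamard_of U A hint]
  simp_rw [integral_complex_ofReal, integral_Ioi_inv_add_mul_add (ha _) (hb _),
    Complex.ofReal_inv]
  rfl

end PosDef

/-- `[ρ]_ω` is invertible on `M_n(ℂ)`, with inverse given by
`A ↦ ∫₀^∞ (tI + e^{−ω/2}ρ)⁻¹ A (tI + e^{ω/2}ρ)⁻¹ dt`. -/
theorem mulRho_invertible {n : ℕ} (ρ : Matrix (Fin n) (Fin n) ℂ) (hρ : ρ.PosDef)
    (ω : ℝ) :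
    Function.Bijective (mulRho hρ ω) ∧
    (∀ A : Matrix (Fin n) (Fin n) ℂ, divRho ρ ω (mulRho hρ ω A) = A) ∧
    (∀ A : Matrix (Fin n) (Fin n) ℂ, mulRho hρ ω (divRho ρ ω A) = A) := by
  have hL k l : (logMean (exp (-ω / 2) * hρ.1.eigenvalues k)
      (exp (ω / 2) * hρ.1.eigenvalues l) : ℂ) ≠ 0 :=
    Complex.ofReal_ne_zero.2
      (logMean_pos (hρ.exp_mul_eigenvalues_pos _ k) (hρ.exp_mul_eigenvalues_pos _ l)).ne'
  have left_inv (A : Matrix (Fin n) (Fin n) ℂ) : divRho ρ ω (mulRho hρ ω A) = A := by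
    rw [mulRho_eq_conjHadamard, divRho_eq_conjHadamard hρ, conjHadamard_conjHadamard]
    convert conjHadamard_of_one _ A using 2
    ext k l
    exact inv_mul_cancel₀ (hL k l)
  have right_inv (A : Matrix (Fin n) (Fin n) ℂ) : mulRho hρ ω (divRho ρ ω A) = A := by
    rw [mulRho_eq_conjHadamard, divRho_eq_conjHadamard hρ, conjHadamard_conjHadamard]
    convert conjHadamard_of_one _ A using 2
    ext k l
    exact mul_inv_cancel₀ (hL k l)
  exact ⟨Function.bijective_iff_has_inverse.2 ⟨divRho ρ ω, left_inv, right_inv⟩,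
    left_inv, right_inv⟩
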